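/- arXiv:2102.07609 — 6 statements merged into one kernel-verified Lean document; each statement's English description precedes it below -/
import Mathlib

section
/- Let (M,ρ) be a pseudometric space and X a real Banach space with dim X > 1. Let F assign to each x ∈ M a nonempty compact convex subset F(x) ⊆ X of dimension at most 1 (i.e., a point or a closed bounded line segment). Assume that for every subset M' ⊆ M with at most 4 points there is a selection f : M' → X with ‖f(x) − f(y)‖ ≤ ρ(x,y) for all x,y ∈ M'. Let λ1 ≥ 1, λ2 ≥ 3λ1, and γ ≥ λ2·(3λ2+λ1)/(λ2−λ1). Then for every x ∈ M the second balanced refinement F²(x) is nonempty, and d_H(F²(x), F²(y)) ≤ γ·ρ(x,y) for all x,y ∈ M. In particular, one can take λ1 = 1, λ2 = 3, γ = 15. -/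
open Pointwise Metric

/-- Hausdorff distance between subsets of a normed space, defined via Minkowski
sums with closed balls. -/
noncomputable def hausDistB {X : Type*} [NormedAddCommGroup X] (A B : Set X) : ℝ :=
  sInf {r : ℝ | 0 < r ∧ A ⊆ B + closedBall (0 : X) r ∧ B ⊆ A + closedBall (0 : X) r}

/-!
Every set in sight lies on the line carrying some value of `F`, and on a line Helly's theorem
says that pairwise intersecting compact convex sets have a common point. Nonemptiness of the
refinements therefore reduces to intersections of two sets, which the selections on four points
provide: of three selected points on the line of `F z₁` one lies between the other two, and the
corresponding convex combination of selected points elsewhere does the job.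

For the Lipschitz bound take `ξ ∈ F²(x)`. For each `z`, a point on the segment from a point of
`F¹(y)` close to `ξ` to a point of `F(y)` close to `F¹(z)` is within `γ ρ(x,y)` of `ξ` and within
`λ₂ ρ(y,z)` of `F¹(z)`; Helly's theorem on the line of `F(y)` turns these points into a single
point of `F²(y)` within `γ ρ(x,y)` of `ξ`.
-/

open Set

section

variable {M X : Type*} [NormedAddCommGroup X]

structure IsPseudometric (ρ : M → M → ℝ) : Prop where
  refl : ∀ x, ρ x x = 0
  symm : ∀ x y, ρ x y = ρ y x
  triangle : ∀ x y z, ρ x z ≤ ρ x y + ρ y z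

theorem IsPseudometric.nonneg {ρ : M → M → ℝ} (hρ : IsPseudometric ρ) (x y : M) :
    0 ≤ ρ x y := by
  have h := hρ.triangle x y x
  rw [hρ.refl, hρ.symm y x] at h
  linarith

theorem mem_add_closedBall_zero_iff {A : Set X} {r : ℝ} {p : X} :
    p ∈ A + closedBall (0 : X) r ↔ ∃ u ∈ A, ‖p - u‖ ≤ r := by
  simp only [mem_add, mem_closedBall_zero_iff]
  constructor
  · rintro ⟨u, hu, v, hv, rfl⟩
    exact ⟨u, hu, by simpa using hv⟩
  · rintro ⟨u, hu, h⟩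
    exact ⟨u, hu, p - u, h, add_sub_cancel u p⟩

theorem hausDistB_le_of_subset_add_closedBall {A B : Set X} {r : ℝ} (hr : 0 ≤ r)
    (hAB : A ⊆ B + closedBall (0 : X) r) (hBA : B ⊆ A + closedBall (0 : X) r) :
    hausDistB A B ≤ r := by
  refine le_of_forall_pos_le_add fun ε hε =>
    csInf_le ⟨0, fun s hs => hs.1.le⟩ ⟨by linarith, ?_, ?_⟩
  · exact hAB.trans (add_subset_add_left (closedBall_subset_closedBall (by linarith)))
  · exact hBA.trans (add_subset_add_left (closedBall_subset_closedBall (by linarith)))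

def LipschitzSelectableUpTo (N : ℕ) (ρ : M → M → ℝ) (F : M → Set X) : Prop :=
  ∀ M' : Finset M, M'.card ≤ N → ∃ f : M → X, (∀ x ∈ M', f x ∈ F x) ∧
    ∀ x ∈ M', ∀ y ∈ M', ‖f x - f y‖ ≤ ρ x y

def balancedRefinement (ρ : M → M → ℝ) (lam : ℝ) (F : M → Set X) (x : M) : Set X :=
  ⋂ z, F z + closedBall (0 : X) (lam * ρ x z)

def pairRefinement (ρ : M → M → ℝ) (lam : ℝ) (F : M → Set X) (z w : M) : Set X :=
  F z ∩ (F w + closedBall (0 : X) (lam * ρ z w))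

section Refinement

variable {ρ : M → M → ℝ} {lam : ℝ} {F : M → Set X}

theorem LipschitzSelectableUpTo.mono {N N' : ℕ} (h : LipschitzSelectableUpTo N ρ F)
    (hN : N' ≤ N) : LipschitzSelectableUpTo N' ρ F :=
  fun M' hM' => h M' (hM'.trans hN)

theorem mem_balancedRefinement_iff {x : M} {p : X} :
    p ∈ balancedRefinement ρ lam F x ↔ ∀ z, ∃ u ∈ F z, ‖p - u‖ ≤ lam * ρ x z := by
  simp only [balancedRefinement, mem_iInter, mem_add_closedBall_zero_iff]

theorem balancedRefinement_subset {x : M} (hx : ρ x x = 0) :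
    balancedRefinement ρ lam F x ⊆ F x := fun p hp => by
  simpa [hx] using mem_iInter.mp hp x

theorem isCompact_balancedRefinement {x : M} (hx : ρ x x = 0) (hcp : ∀ z, IsCompact (F z)) :
    IsCompact (balancedRefinement ρ lam F x) :=
  (hcp x).of_isClosed_subset
    (isClosed_iInter fun z => isClosed_closedBall.add_left_of_isCompact (hcp z))
    (balancedRefinement_subset hx)

theorem isCompact_pairRefinement (hcp : ∀ z, IsCompact (F z)) (z w : M) :
    IsCompact (pairRefinement ρ lam F z w) :=
  (hcp z).inter_right (isClosed_closedBall.add_left_of_isCompact (hcp w))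

theorem mem_pairRefinement_of_norm_sub_le (hlam : 1 ≤ lam) {z w : M} {u v : X} (hu : u ∈ F z)
    (hv : v ∈ F w) (huv : ‖u - v‖ ≤ ρ z w) : u ∈ pairRefinement ρ lam F z w :=
  ⟨hu, mem_add_closedBall_zero_iff.mpr
    ⟨v, hv, huv.trans (le_mul_of_one_le_left ((norm_nonneg _).trans huv) hlam)⟩⟩

theorem balancedRefinement_subset_pairRefinement {z : M} (hz : ρ z z = 0) (w : M) :
    balancedRefinement ρ lam F z ⊆ pairRefinement ρ lam F z w :=
  fun _ hp => ⟨balancedRefinement_subset hz hp, mem_iInter.mp hp w⟩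

theorem iInter_pairRefinement_subset (z : M) :
    ⋂ w, pairRefinement ρ lam F z w ⊆ balancedRefinement ρ lam F z :=
  iInter_mono fun _ => inter_subset_right

end Refinement

variable [NormedSpace ℝ X]

theorem norm_combo_sub_combo_le {a b : ℝ} (ha : 0 ≤ a) (hb : 0 ≤ b) (u v u' v' : X) :
    ‖(a • u + b • v) - (a • u' + b • v')‖ ≤ a * ‖u - u'‖ + b * ‖v - v'‖ :=
  calc ‖(a • u + b • v) - (a • u' + b • v')‖ = ‖a • (u - u') + b • (v - v')‖ := by
        congr 1; module
    _ ≤ ‖a • (u - u')‖ + ‖b • (v - v')‖ := norm_add_le _ _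
    _ = a * ‖u - u'‖ + b * ‖v - v'‖ := by rw [norm_smul_of_nonneg ha, norm_smul_of_nonneg hb]

theorem exists_mem_segment_norm_sub_le {a b a' b' u : X} {r : ℝ} (hu : u ∈ segment ℝ a b)
    (ha : ‖a - a'‖ ≤ r) (hb : ‖b - b'‖ ≤ r) : ∃ v ∈ segment ℝ a' b', ‖u - v‖ ≤ r := by
  obtain ⟨s, t, hs, ht, hst, rfl⟩ := hu
  refine ⟨s • a' + t • b', ⟨s, t, hs, ht, hst, rfl⟩, ?_⟩
  calc _ ≤ s * ‖a - a'‖ + t * ‖b - b'‖ := norm_combo_sub_combo_le hs ht _ _ _ _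
    _ ≤ s * r + t * r := by gcongr
    _ = r := by rw [← add_mul, hst, one_mul]

theorem exists_mem_segment_norm_sub_le_and_norm_sub_le {ξ η ζ w : X} {lam1 lam2 r s : ℝ}
    (hlam1 : 0 ≤ lam1) (hlam : lam1 < lam2) (hr : 0 ≤ r) (hs : 0 ≤ s)
    (hη : ‖ξ - η‖ ≤ lam2 * r) (hζ : ‖ξ - ζ‖ ≤ lam2 * (r + s)) (hw : ‖ζ - w‖ ≤ lam1 * s) :
    ∃ q ∈ segment ℝ η w,
      ‖q - ζ‖ ≤ lam2 * s ∧ ‖ξ - q‖ ≤ lam2 * (3 * lam2 + lam1) / (lam2 - lam1) * r := by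
  have hηζ : ‖η - ζ‖ ≤ lam2 * r + lam2 * (r + s) := by
    linarith [norm_sub_le_norm_sub_add_norm_sub η ξ ζ, norm_sub_rev η ξ]
  rcases hr.eq_or_lt with rfl | hr
  · exact ⟨η, left_mem_segment ℝ η w, by linarith, by simpa using hη⟩
  have hξw : ‖ξ - w‖ ≤ lam2 * (r + s) + lam1 * s := by
    linarith [norm_sub_le_norm_sub_add_norm_sub ξ ζ w]
  have hwζ : ‖w - ζ‖ ≤ lam1 * s := by rwa [norm_sub_rev]
  set D := 2 * lam2 * r + (lam2 - lam1) * s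
  have hD : 0 < D := by nlinarith
  -- the weights make the first estimate an equality
  set a := (lam2 - lam1) * s / D
  set b := 2 * lam2 * r / D
  have ha : 0 ≤ a := div_nonneg (mul_nonneg (by linarith) hs) hD.le
  have hb : 0 ≤ b := div_nonneg (by nlinarith) hD.le
  have hab : a + b = 1 := by
    rw [← add_div, div_eq_one_iff_eq hD.ne']; ring
  refine ⟨a • η + b • w, ⟨a, b, ha, hb, hab, rfl⟩, ?_, ?_⟩
  · calc ‖a • η + b • w - ζ‖ = ‖(a • η + b • w) - (a • ζ + b • ζ)‖ := by
          rw [Convex.combo_self hab]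
      _ ≤ a * ‖η - ζ‖ + b * ‖w - ζ‖ := norm_combo_sub_combo_le ha hb _ _ _ _
      _ ≤ a * (lam2 * r + lam2 * (r + s)) + b * (lam1 * s) := by gcongr
      _ = lam2 * s := by
          rw [div_mul_eq_mul_div, div_mul_eq_mul_div, ← add_div, div_eq_iff hD.ne']
          ring
  · calc ‖ξ - (a • η + b • w)‖ = ‖(a • ξ + b • ξ) - (a • η + b • w)‖ := by
          rw [Convex.combo_self hab]
      _ ≤ a * ‖ξ - η‖ + b * ‖ξ - w‖ := norm_combo_sub_combo_le ha hb _ _ _ _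
      _ ≤ a * (lam2 * r) + b * (lam2 * (r + s) + lam1 * s) := by gcongr
      _ ≤ lam2 * (3 * lam2 + lam1) / (lam2 - lam1) * r := by
          rw [div_mul_eq_mul_div, div_mul_eq_mul_div, ← add_div, div_le_iff₀ hD,
            div_mul_eq_mul_div, div_mul_eq_mul_div, le_div_iff₀ (sub_pos.2 hlam)]
          nlinarith [mul_nonneg (sq_nonneg (lam2 * r)) (by linarith : (0 : ℝ) ≤ lam2 + lam1)]

theorem Real.nonempty_iInter_of_pairwise_inter_nonempty {ι : Type*} {T : ι → Set ℝ}
    (hcv : ∀ i, Convex ℝ (T i)) (hcp : ∀ i, IsCompact (T i))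
    (hpw : ∀ i j, (T i ∩ T j).Nonempty) : (⋂ i, T i).Nonempty := by
  classical
  refine Convex.helly_theorem_compact' hcv hcp fun I hI => ?_
  rw [Module.finrank_self] at hI
  obtain h | h | h : I.card = 0 ∨ I.card = 1 ∨ I.card = 2 := by omega
  · simp [Finset.card_eq_zero.mp h]
  · obtain ⟨i, rfl⟩ := Finset.card_eq_one.mp h
    simpa using hpw i i
  · obtain ⟨i, j, -, rfl⟩ := Finset.card_eq_two.mp h
    simpa using hpw i j

theorem nonempty_iInter_of_subset_collinear {ι : Type*} {K : Set X} (hK : Collinear ℝ K)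
    {S : ι → Set X} (hSK : ∀ i, S i ⊆ K) (hcv : ∀ i, Convex ℝ (S i))
    (hcp : ∀ i, IsCompact (S i)) (hpw : ∀ i j, (S i ∩ S j).Nonempty) :
    (⋂ i, S i).Nonempty := by
  obtain ⟨p₀, v, hKline⟩ := (collinear_iff_exists_forall_eq_smul_vadd K).mp hK
  rcases eq_or_ne v 0 with rfl | hv
  · refine ⟨p₀, mem_iInter.mpr fun i => ?_⟩
    obtain ⟨p, hp, -⟩ := hpw i i
    obtain ⟨t, rfl⟩ := hKline p (hSK i hp)
    simpa using hp
  let φ : ℝ →ᵃ[ℝ] X := AffineMap.lineMap p₀ (v +ᵥ p₀)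
  have hφ : ∀ t : ℝ, φ t = t • v +ᵥ p₀ := fun t => by simp [φ, AffineMap.lineMap_apply]
  have hφemb : Topology.IsClosedEmbedding φ := by
    have : (φ : ℝ → X) = (· + p₀) ∘ (· • v) := funext hφ
    rw [this]
    exact (Homeomorph.addRight p₀).isClosedEmbedding.comp (isClosedEmbedding_smul_left hv)
  have hpw' : ∀ i j, (φ ⁻¹' S i ∩ φ ⁻¹' S j).Nonempty := by
    intro i j
    obtain ⟨p, hpi, hpj⟩ := hpw i j
    obtain ⟨t, rfl⟩ := hKline p (hSK i hpi)
    exact ⟨t, by simpa [hφ] using hpi, by simpa [hφ] using hpj⟩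
  obtain ⟨t, ht⟩ := Real.nonempty_iInter_of_pairwise_inter_nonempty
    (fun i => (hcv i).affine_preimage φ) (fun i => hφemb.isCompact_preimage (hcp i)) hpw'
  exact ⟨φ t, by simpa using ht⟩

theorem mem_iInter_add_closedBall_of_subset_collinear {ι : Type*} [Nonempty ι] {K : Set X}
    (hK : Collinear ℝ K) (hKcv : Convex ℝ K) (hKcp : IsCompact K) {T : ι → Set X}
    (hTK : ∀ i, T i ⊆ K) (hcv : ∀ i, Convex ℝ (T i)) (hcl : ∀ i, IsClosed (T i))
    (hpw : ∀ i j, (T i ∩ T j).Nonempty) {c : X} {r : ℝ}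
    (hc : ∀ i, c ∈ T i + closedBall (0 : X) r) : c ∈ (⋂ i, T i) + closedBall (0 : X) r := by
  have near : ∀ {A : Set X}, c ∈ A + closedBall (0 : X) r ↔ (A ∩ closedBall c r).Nonempty := by
    simp [mem_add_closedBall_zero_iff, Set.Nonempty, dist_eq_norm, norm_sub_rev]
  let S : Option ι → Set X := fun o => o.elim (K ∩ closedBall c r) T
  have hball : ∀ i, (S none ∩ S (some i)).Nonempty := fun i =>
    let ⟨p, hpT, hpc⟩ := near.mp (hc i)
    ⟨p, ⟨hTK i hpT, hpc⟩, hpT⟩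
  have hpwS : ∀ o o', (S o ∩ S o').Nonempty := by
    rintro (_ | i) (_ | j)
    · obtain ⟨i⟩ := ‹Nonempty ι›
      obtain ⟨p, hp, -⟩ := hball i
      exact ⟨p, hp, hp⟩
    · exact hball j
    · rw [inter_comm]; exact hball i
    · exact hpw i j
  obtain ⟨p, hp⟩ := nonempty_iInter_of_subset_collinear hK (S := S)
    (by rintro (_ | i); exacts [inter_subset_left, hTK i])
    (by rintro (_ | i); exacts [hKcv.inter (convex_closedBall c r), hcv i])
    (by rintro (_ | i); exacts [hKcp.inter_right isClosed_closedBall,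
      hKcp.of_isClosed_subset (hcl i) (hTK i)])
    hpwS
  rw [iInter_option] at hp
  exact near.mpr ⟨p, hp.2, hp.1.2⟩

section Refinement

variable {ρ : M → M → ℝ} {lam lam1 lam2 : ℝ} {F : M → Set X}

theorem convex_balancedRefinement (hcv : ∀ z, Convex ℝ (F z)) (x : M) :
    Convex ℝ (balancedRefinement ρ lam F x) :=
  convex_iInter fun z => (hcv z).add (convex_closedBall _ _)

theorem convex_pairRefinement (hcv : ∀ z, Convex ℝ (F z)) (z w : M) :
    Convex ℝ (pairRefinement ρ lam F z w) :=
  (hcv z).inter ((hcv w).add (convex_closedBall _ _))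

theorem balancedRefinement_nonempty (hF : LipschitzSelectableUpTo 3 ρ F)
    (hcp : ∀ z, IsCompact (F z)) (hcv : ∀ z, Convex ℝ (F z)) (hcol : ∀ z, Collinear ℝ (F z))
    (hlam : 1 ≤ lam) (x : M) : (balancedRefinement ρ lam F x).Nonempty := by
  classical
  refine (nonempty_iInter_of_subset_collinear (hcol x) (S := pairRefinement ρ lam F x)
    (fun _ => inter_subset_left) (convex_pairRefinement hcv x) (isCompact_pairRefinement hcp x)
    fun z₁ z₂ => ?_).mono (iInter_pairRefinement_subset x)
  obtain ⟨f, hfF, hf⟩ := hF {x, z₁, z₂} Finset.card_le_three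
  exact ⟨f x,
    mem_pairRefinement_of_norm_sub_le hlam (hfF x (by simp)) (hfF z₁ (by simp))
      (hf x (by simp) z₁ (by simp)),
    mem_pairRefinement_of_norm_sub_le hlam (hfF x (by simp)) (hfF z₂ (by simp))
      (hf x (by simp) z₂ (by simp))⟩

theorem exists_mem_add_closedBall_pairRefinement (hF : LipschitzSelectableUpTo 4 ρ F)
    (hcv : ∀ z, Convex ℝ (F z)) (hcol : ∀ z, Collinear ℝ (F z)) (hlam : 1 ≤ lam)
    (x z₁ z₂ w₁ w₂ : M) :
    ∃ p ∈ F x, p ∈ pairRefinement ρ lam F z₁ w₁ + closedBall (0 : X) (ρ x z₁) ∧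
      p ∈ pairRefinement ρ lam F z₂ w₂ +
        closedBall (0 : X) (max (ρ x z₂) (ρ x z₁ + ρ z₁ z₂)) := by
  classical
  have near : ∀ {A : Set X} {p u : X} {r r' : ℝ}, u ∈ A → ‖p - u‖ ≤ r → r ≤ r' →
      p ∈ A + closedBall (0 : X) r' :=
    fun hu hpu hr => mem_add_closedBall_zero_iff.mpr ⟨_, hu, hpu.trans hr⟩
  obtain ⟨f, hfF, hf⟩ := hF {x, z₁, w₁} (Finset.card_le_three.trans (by norm_num))
  obtain ⟨g, hgF, hg⟩ := hF {x, z₁, z₂, w₂} Finset.card_le_four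
  obtain ⟨h, hhF, hh⟩ := hF {z₁, z₂, w₁, w₂} Finset.card_le_four
  have hfJ : f z₁ ∈ pairRefinement ρ lam F z₁ w₁ := mem_pairRefinement_of_norm_sub_le hlam
    (hfF _ (by simp)) (hfF _ (by simp)) (hf _ (by simp) _ (by simp))
  have hgJ : g z₂ ∈ pairRefinement ρ lam F z₂ w₂ := mem_pairRefinement_of_norm_sub_le hlam
    (hgF _ (by simp)) (hgF _ (by simp)) (hg _ (by simp) _ (by simp))
  have hh₁J : h z₁ ∈ pairRefinement ρ lam F z₁ w₁ := mem_pairRefinement_of_norm_sub_le hlam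
    (hhF _ (by simp)) (hhF _ (by simp)) (hh _ (by simp) _ (by simp))
  have hh₂J : h z₂ ∈ pairRefinement ρ lam F z₂ w₂ := mem_pairRefinement_of_norm_sub_le hlam
    (hhF _ (by simp)) (hhF _ (by simp)) (hh _ (by simp) _ (by simp))
  have hcol₁ : Collinear ℝ ({f z₁, g z₁, h z₁} : Set X) := (hcol z₁).subset <| by
    simp only [insert_subset_iff, singleton_subset_iff]
    exact ⟨hfF _ (by simp), hgF _ (by simp), hhF _ (by simp)⟩
  rcases hcol₁.wbtw_or_wbtw_or_wbtw with hfgh | hghf | hhfg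
  · have hg₁J : g z₁ ∈ pairRefinement ρ lam F z₁ w₁ :=
      (convex_pairRefinement hcv z₁ w₁).segment_subset hfJ hh₁J hfgh.mem_segment
    exact ⟨g x, hgF x (by simp), near hg₁J (hg _ (by simp) _ (by simp)) le_rfl,
      near hgJ (hg _ (by simp) _ (by simp)) (le_max_left _ _)⟩
  · obtain ⟨p, hp, hpd⟩ := exists_mem_segment_norm_sub_le hghf.mem_segment
      ((norm_sub_rev _ _).trans_le (hg x (by simp) z₁ (by simp)))
      ((norm_sub_rev _ _).trans_le (hf x (by simp) z₁ (by simp)))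
    rw [norm_sub_rev] at hpd
    refine ⟨p, (hcv x).segment_subset (hgF x (by simp)) (hfF x (by simp)) hp,
      near hh₁J hpd le_rfl, near hh₂J ?_ (le_max_right _ _)⟩
    linarith [norm_sub_le_norm_sub_add_norm_sub p (h z₁) (h z₂), hh z₁ (by simp) z₂ (by simp)]
  · obtain ⟨m, hm, hmd⟩ := exists_mem_segment_norm_sub_le hhfg.mem_segment
      (hh _ (by simp) z₂ (by simp)) (hg _ (by simp) z₂ (by simp))
    refine ⟨f x, hfF x (by simp), near hfJ (hf _ (by simp) _ (by simp)) le_rfl,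
      near ((convex_pairRefinement hcv z₂ w₂).segment_subset hh₂J hgJ hm) ?_ (le_max_right _ _)⟩
    linarith [norm_sub_le_norm_sub_add_norm_sub (f x) (f z₁) m, hf x (by simp) z₁ (by simp)]

theorem balancedRefinement_balancedRefinement_nonempty (hρ : IsPseudometric ρ)
    (hF : LipschitzSelectableUpTo 4 ρ F) (hcp : ∀ z, IsCompact (F z))
    (hcv : ∀ z, Convex ℝ (F z)) (hcol : ∀ z, Collinear ℝ (F z)) (hlam1 : 1 ≤ lam1)
    (hlam2 : 3 ≤ lam2) (x : M) :
    (balancedRefinement ρ lam2 (balancedRefinement ρ lam1 F) x).Nonempty := by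
  have : Nonempty M := ⟨x⟩
  let J := pairRefinement ρ lam1 F
  obtain ⟨p, hp⟩ := nonempty_iInter_of_subset_collinear (hcol x)
    (S := fun zw : M × M => F x ∩ (J zw.1 zw.2 + closedBall (0 : X) (lam2 * ρ x zw.1)))
    (fun _ => inter_subset_left)
    (fun _ => (hcv x).inter ((convex_pairRefinement hcv _ _).add (convex_closedBall _ _)))
    (fun _ => (hcp x).inter_right
      (isClosed_closedBall.add_left_of_isCompact (isCompact_pairRefinement hcp _ _)))
    (by
      rintro ⟨z₁, w₁⟩ ⟨z₂, w₂⟩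
      wlog h : ρ x z₁ ≤ ρ x z₂ generalizing z₁ z₂ w₁ w₂
      · rw [inter_comm]; exact this z₂ w₂ z₁ w₁ (le_of_not_ge h)
      obtain ⟨p, hpx, hp₁, hp₂⟩ :=
        exists_mem_add_closedBall_pairRefinement hF hcv hcol hlam1 x z₁ z₂ w₁ w₂
      have hr₁ : ρ x z₁ ≤ lam2 * ρ x z₁ := le_mul_of_one_le_left (hρ.nonneg x z₁) (by linarith)
      have hr₂ : max (ρ x z₂) (ρ x z₁ + ρ z₁ z₂) ≤ lam2 * ρ x z₂ := max_le
        (le_mul_of_one_le_left (hρ.nonneg x z₂) (by linarith))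
        (by nlinarith [hρ.triangle z₁ x z₂, hρ.symm z₁ x, hρ.nonneg x z₂])
      exact ⟨p, ⟨hpx, add_subset_add_left (closedBall_subset_closedBall hr₁) hp₁⟩,
        hpx, add_subset_add_left (closedBall_subset_closedBall hr₂) hp₂⟩)
  refine ⟨p, mem_iInter.mpr fun z => add_subset_add_right (iInter_pairRefinement_subset z) ?_⟩
  obtain ⟨q, hq⟩ := balancedRefinement_nonempty (hF.mono (by norm_num)) hcp hcv hcol hlam1 z
  exact mem_iInter_add_closedBall_of_subset_collinear (hcol z) (hcv z) (hcp z)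
    (fun _ => inter_subset_left) (convex_pairRefinement hcv z)
    (fun w => (isCompact_pairRefinement hcp z w).isClosed)
    (fun w₁ w₂ => ⟨q, balancedRefinement_subset_pairRefinement (hρ.refl z) w₁ hq,
      balancedRefinement_subset_pairRefinement (hρ.refl z) w₂ hq⟩)
    fun w => (mem_iInter.mp hp (z, w)).2

theorem balancedRefinement_balancedRefinement_subset_add_closedBall (hρ : IsPseudometric ρ)
    (hcp : ∀ z, IsCompact (F z)) (hcv : ∀ z, Convex ℝ (F z)) (hcol : ∀ z, Collinear ℝ (F z))
    (hlam1 : 0 ≤ lam1) (hlam : lam1 < lam2) {x y : M}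
    (hy : (balancedRefinement ρ lam2 (balancedRefinement ρ lam1 F) y).Nonempty) :
    balancedRefinement ρ lam2 (balancedRefinement ρ lam1 F) x ⊆
      balancedRefinement ρ lam2 (balancedRefinement ρ lam1 F) y +
        closedBall (0 : X) (lam2 * (3 * lam2 + lam1) / (lam2 - lam1) * ρ x y) := by
  have : Nonempty M := ⟨x⟩
  set F₁ := balancedRefinement ρ lam1 F
  set T : M → Set X := fun z => F y ∩ (F₁ z + closedBall (0 : X) (lam2 * ρ y z))
  have hyT : ∀ z, balancedRefinement ρ lam2 F₁ y ⊆ T z := fun z p hp =>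
    ⟨balancedRefinement_subset (hρ.refl y) (balancedRefinement_subset (hρ.refl y) hp),
      mem_iInter.mp hp z⟩
  intro ξ hξ
  refine add_subset_add_right (iInter_mono fun z => (inter_subset_right : T z ⊆ _)) ?_
  refine mem_iInter_add_closedBall_of_subset_collinear (T := T) (hcol y) (hcv y) (hcp y)
    (fun _ => inter_subset_left)
    (fun z => (hcv y).inter ((convex_balancedRefinement hcv z).add (convex_closedBall _ _)))
    (fun z => (hcp y).isClosed.inter (isClosed_closedBall.add_left_of_isCompact
      (isCompact_balancedRefinement (hρ.refl z) hcp)))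
    (fun z₁ z₂ => hy.mono (subset_inter (hyT z₁) (hyT z₂))) fun z => ?_
  obtain ⟨η, hηy, hη⟩ := mem_balancedRefinement_iff.mp hξ y
  obtain ⟨ζ, hζz, hζ⟩ := mem_balancedRefinement_iff.mp hξ z
  obtain ⟨w, hwy, hw⟩ := mem_balancedRefinement_iff.mp hζz y
  have hζ' : ‖ξ - ζ‖ ≤ lam2 * (ρ x y + ρ y z) :=
    hζ.trans (mul_le_mul_of_nonneg_left (hρ.triangle x y z) (by linarith))
  obtain ⟨q, hq, hqζ, hξq⟩ := exists_mem_segment_norm_sub_le_and_norm_sub_le hlam1 hlam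
    (hρ.nonneg x y) (hρ.nonneg y z) hη hζ' (by rwa [hρ.symm] at hw)
  exact mem_add_closedBall_zero_iff.mpr ⟨q,
    ⟨(hcv y).segment_subset (balancedRefinement_subset (hρ.refl y) hηy) hwy hq,
      mem_add_closedBall_zero_iff.mpr ⟨ζ, hζz, hqζ⟩⟩, hξq⟩

end Refinement

end

theorem core_line_segments_banach_general
    {M : Type*} (ρ : M → M → ℝ)
    (hρ_refl : ∀ x, ρ x x = 0)
    (hρ_symm : ∀ x y, ρ x y = ρ y x)
    (hρ_tri : ∀ x y z, ρ x z ≤ ρ x y + ρ y z)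
    {X : Type*} [NormedAddCommGroup X] [NormedSpace ℝ X]
    (F : M → Set X)
    (hFcp : ∀ x, IsCompact (F x))
    (hFcv : ∀ x, Convex ℝ (F x))
    -- every set `F x` has dimension at most 1: it lies on a line
    (hFdim : ∀ x, ∃ a d : X, ∀ y ∈ F x, ∃ t : ℝ, y = a + t • d)
    -- finiteness hypothesis: selections on subsets of at most 4 points
    (hfin : ∀ M' : Finset M, M'.card ≤ 4 →
      ∃ f : M → X, (∀ x ∈ M', f x ∈ F x) ∧
        ∀ x ∈ M', ∀ y ∈ M', ‖f x - f y‖ ≤ ρ x y)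
    (lam1 lam2 γ : ℝ) (hlam1 : 1 ≤ lam1) (hlam2 : 3 * lam1 ≤ lam2)
    (hγ : lam2 * (3 * lam2 + lam1) / (lam2 - lam1) ≤ γ)
    -- the first and second balanced refinements of `F`
    (F1 F2 : M → Set X)
    (hF1 : ∀ x, F1 x = ⋂ z, F z + closedBall (0 : X) (lam1 * ρ x z))
    (hF2 : ∀ x, F2 x = ⋂ z, F1 z + closedBall (0 : X) (lam2 * ρ x z)) :
    (∀ x, (F2 x).Nonempty) ∧ ∀ x y, hausDistB (F2 x) (F2 y) ≤ γ * ρ x y := by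
  have hρ : IsPseudometric ρ := ⟨hρ_refl, hρ_symm, hρ_tri⟩
  have hcol : ∀ x, Collinear ℝ (F x) := fun x => by
    obtain ⟨a, d, hline⟩ := hFdim x
    refine (collinear_iff_exists_forall_eq_smul_vadd _).mpr ⟨a, d, fun p hp => ?_⟩
    obtain ⟨t, rfl⟩ := hline p hp
    exact ⟨t, add_comm _ _⟩
  obtain rfl : F2 = balancedRefinement ρ lam2 F1 := funext hF2
  obtain rfl : F1 = balancedRefinement ρ lam1 F := funext hF1
  set F₂ := balancedRefinement ρ lam2 (balancedRefinement ρ lam1 F)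
  have hne : ∀ x, (F₂ x).Nonempty :=
    balancedRefinement_balancedRefinement_nonempty hρ hfin hFcp hFcv hcol hlam1 (by linarith)
  have hγ₀ : 0 ≤ γ := (div_nonneg (mul_nonneg (by linarith) (by linarith)) (by linarith)).trans hγ
  have hnear : ∀ x y, F₂ x ⊆ F₂ y + closedBall (0 : X) (γ * ρ x y) := fun x y =>
    (balancedRefinement_balancedRefinement_subset_add_closedBall hρ hFcp hFcv hcol
      (by linarith) (by linarith) (hne y)).trans
      (add_subset_add_left (closedBall_subset_closedBall
        (mul_le_mul_of_nonneg_right hγ (hρ.nonneg x y))))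
  exact ⟨hne, fun x y => hausDistB_le_of_subset_add_closedBall
    (mul_nonneg hγ₀ (hρ.nonneg x y)) (hnear x y) (hρ.symm x y ▸ hnear y x)⟩

theorem core_line_segments_banach
    {M : Type*} (ρ : M → M → ℝ)
    (hρ_refl : ∀ x, ρ x x = 0)
    (hρ_symm : ∀ x y, ρ x y = ρ y x)
    (hρ_tri : ∀ x y z, ρ x z ≤ ρ x y + ρ y z)
    {X : Type*} [NormedAddCommGroup X] [NormedSpace ℝ X] [CompleteSpace X]
    (hdim : 1 < Module.rank ℝ X)
    (F : M → Set X)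
    (hFne : ∀ x, (F x).Nonempty)
    (hFcp : ∀ x, IsCompact (F x))
    (hFcv : ∀ x, Convex ℝ (F x))
    -- every set `F x` has dimension at most 1: it lies on a line
    (hFdim : ∀ x, ∃ a d : X, ∀ y ∈ F x, ∃ t : ℝ, y = a + t • d)
    -- finiteness hypothesis: selections on subsets of at most 4 points
    (hfin : ∀ M' : Finset M, M'.card ≤ 4 →
      ∃ f : M → X, (∀ x ∈ M', f x ∈ F x) ∧
        ∀ x ∈ M', ∀ y ∈ M', ‖f x - f y‖ ≤ ρ x y)
    (lam1 lam2 γ : ℝ) (hlam1 : 1 ≤ lam1) (hlam2 : 3 * lam1 ≤ lam2)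
    (hγ : lam2 * (3 * lam2 + lam1) / (lam2 - lam1) ≤ γ)
    -- the first and second balanced refinements of `F`
    (F1 F2 : M → Set X)
    (hF1 : ∀ x, F1 x = ⋂ z, F z + closedBall (0 : X) (lam1 * ρ x z))
    (hF2 : ∀ x, F2 x = ⋂ z, F1 z + closedBall (0 : X) (lam2 * ρ x z)) :
    (∀ x, (F2 x).Nonempty) ∧ ∀ x y, hausDistB (F2 x) (F2 y) ≤ γ * ρ x y :=
  core_line_segments_banach_general ρ hρ_refl hρ_symm hρ_tri F hFcp hFcv hFdim hfin lam1 lam2 γ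
    hlam1 hlam2 hγ F1 F2 hF1 hF2
end

section
/- Let X be a real Banach space, C ⊆ X a convex set, a ∈ X and r ≥ 0, and suppose C ∩ B(a,r) ≠ ∅, where B(a,r) denotes the closed ball of center a and radius r. Then for every s > 0 and every L > 1, (C ∩ B(a, L·r)) + θ(L)·s·B_X ⊇ (C + s·B_X) ∩ B(a, L·r + s), where θ(L) = (3L+1)/(L−1) and B_X is the closed unit ball of X. -/
open Pointwise Metric

/-!
Write a point of the left-hand side as `x = c + u` with `c ∈ C` and `‖u‖ ≤ s`; then `c` lies in
the ball of radius `L r + 2 s` about `a`. Moving `c` towards a point `c₀ ∈ C ∩ B(a, r)` by the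
fraction `t = 2 s / ((L - 1) r + 2 s)` of the segment stays in `C` by convexity and, by convexity
of the distance to `a`, lands in `B(a, L r)`. The displacement is at most `t (L r + 2 s + r)`,
and `s + t (L r + 2 s + r) ≤ (3 L + 1) / (L - 1) · s`.
-/

theorem Convex.exists_mem_inter_closedBall_dist_le {E : Type*} [NormedAddCommGroup E]
    [NormedSpace ℝ E] {C : Set E} (hC : Convex ℝ C) {a c₀ c : E} {r R δ : ℝ}
    (hc₀ : c₀ ∈ C ∩ closedBall a r) (hc : c ∈ C ∩ closedBall a (R + δ)) (hrR : r ≤ R)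
    (hδ : 0 < δ) :
    ∃ c' ∈ C ∩ closedBall a R, dist c' c ≤ δ / (R + δ - r) * (R + δ + r) := by
  have hpos : 0 < R + δ - r := by linarith
  set t := δ / (R + δ - r)
  have ht₀ : 0 ≤ t := by positivity
  have ht₁ : t ≤ 1 := (div_le_one hpos).2 (by linarith)
  have htδ : t * (R + δ - r) = δ := div_mul_cancel₀ _ hpos.ne'
  clear_value t
  refine ⟨AffineMap.lineMap c c₀ t, ⟨hC.lineMap_mem hc.1 hc₀.1 ⟨ht₀, ht₁⟩, ?_⟩, ?_⟩
  · have hconv := (convexOn_univ_dist a).2 (Set.mem_univ c) (Set.mem_univ c₀)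
      (sub_nonneg.2 ht₁) ht₀ (sub_add_cancel 1 t)
    rw [mem_closedBall, AffineMap.lineMap_apply_module]
    calc dist ((1 - t) • c + t • c₀) a ≤ (1 - t) * dist c a + t * dist c₀ a := hconv
      _ ≤ (1 - t) * (R + δ) + t * r := by
        gcongr
        exacts [hc.2, hc₀.2]
      _ = R := by linear_combination -htδ
  · rw [dist_lineMap_left, Real.norm_of_nonneg ht₀]
    gcongr
    calc dist c c₀ ≤ dist c a + dist c₀ a := dist_triangle_right c c₀ a
      _ ≤ R + δ + r := add_le_add hc.2 hc₀.2

theorem add_two_mul_div_mul_le {r s L : ℝ} (hr : 0 ≤ r) (hs : 0 < s) (hL : 1 < L) :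
    s + 2 * s / (L * r + 2 * s - r) * (L * r + 2 * s + r) ≤ (3 * L + 1) / (L - 1) * s := by
  have hD : 0 < L * r + 2 * s - r := by nlinarith
  rw [div_mul_eq_mul_div, div_mul_eq_mul_div, add_div' _ _ _ hD.ne',
    div_le_div_iff₀ hD (by linarith)]
  nlinarith [mul_nonneg (mul_nonneg hs.le hr) (sq_nonneg (L - 1)), mul_pos hs hs,
    mul_nonneg (mul_nonneg hs.le hr) (by linarith : (0 : ℝ) ≤ L - 1)]

theorem neighborhood_of_intersection_banach_general
    {X : Type*} [NormedAddCommGroup X] [NormedSpace ℝ X]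
    (C : Set X) (hC : Convex ℝ C) (a : X) (r : ℝ)
    (hne : (C ∩ closedBall a r).Nonempty)
    (s L : ℝ) (hs : 0 < s) (hL : 1 < L) :
    (C + closedBall (0 : X) s) ∩ closedBall a (L * r + s) ⊆
      (C ∩ closedBall a (L * r)) + closedBall (0 : X) ((3 * L + 1) / (L - 1) * s) := by
  obtain ⟨c₀, hc₀⟩ := hne
  have hr : 0 ≤ r := dist_nonneg.trans hc₀.2
  rintro _ ⟨⟨c, hcC, u, hu, rfl⟩, hx⟩
  rw [mem_closedBall_zero_iff] at hu
  have hc : c ∈ C ∩ closedBall a (L * r + 2 * s) := by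
    refine ⟨hcC, ?_⟩
    calc dist c a ≤ dist c (c + u) + dist (c + u) a := dist_triangle _ _ _
      _ ≤ s + (L * r + s) := by
        rw [dist_self_add_right]
        exact add_le_add hu hx
      _ = L * r + 2 * s := by ring
  obtain ⟨c', hc', hcc'⟩ := hC.exists_mem_inter_closedBall_dist_le hc₀ hc
    (le_mul_of_one_le_left hr hL.le) (by positivity)
  show c + u ∈ _
  refine add_sub_cancel c' (c + u) ▸ Set.add_mem_add hc' (mem_closedBall_zero_iff.2 ?_)
  calc ‖c + u - c'‖ = dist (c + u) c' := (dist_eq_norm _ _).symm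
    _ ≤ dist (c + u) c + dist c c' := dist_triangle _ _ _
    _ ≤ s + 2 * s / (L * r + 2 * s - r) * (L * r + 2 * s + r) := by
      rw [dist_self_add_left, dist_comm]
      exact add_le_add hu hcc'
    _ ≤ (3 * L + 1) / (L - 1) * s := add_two_mul_div_mul_le hr hs hL

theorem neighborhood_of_intersection_banach
    {X : Type*} [NormedAddCommGroup X] [NormedSpace ℝ X] [CompleteSpace X]
    (C : Set X) (hC : Convex ℝ C) (a : X) (r : ℝ) (hr : 0 ≤ r)
    (hne : (C ∩ closedBall a r).Nonempty)
    (s L : ℝ) (hs : 0 < s) (hL : 1 < L) :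
    (C + closedBall (0 : X) s) ∩ closedBall a (L * r + s) ⊆
      (C ∩ closedBall a (L * r)) + closedBall (0 : X) ((3 * L + 1) / (L - 1) * s) :=
  neighborhood_of_intersection_banach_general C hC a r hne s L hs hL
end

section
/- Let X be a real inner product (Euclidean) space, C ⊆ X a convex set, a ∈ X and r ≥ 0, and suppose C ∩ B(a,r) ≠ ∅, where B(a,r) denotes the closed ball of center a and radius r. Then for every s > 0 and every L > 1, (C ∩ B(a, L·r)) + θ(L)·s·B_X ⊇ (C + s·B_X) ∩ B(a, L·r + s), where θ(L) = 1 + 2L/√(L²−1) and B_X is the closed unit ball of X. -/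
/-!
Take `b ∈ C ∩ B(a, r)` and a point `x = c + u` of the left-hand side with `c ∈ C`, `‖u‖ ≤ s`.
If `c` lies outside `B(a, L r)`, replace it by the point `c'` where the segment `[b, c]` leaves
that ball; `c' ∈ C` by convexity. Since `b` lies in the smaller ball `B(a, r)`, the segment meets
the sphere `‖· - a‖ = L r` at an angle bounded away from tangency, so the distance `‖c - c'‖`
travelled beyond the sphere is at most `L / √(L² - 1)` times the radial excess `‖c - a‖ - L r`,
which is at most `2 s`.
-/

open Pointwise Metric RealInnerProductSpace

section InnerProductSpace

variable {X : Type*} [NormedAddCommGroup X] [InnerProductSpace ℝ X]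

theorem sqrt_sq_sub_sq_mul_norm_le_inner {p w : X} {r : ℝ} (hpw : ‖p - w‖ ≤ r)
    (hrp : r ≤ ‖p‖) : √(‖p‖ ^ 2 - r ^ 2) * ‖w‖ ≤ ⟪p, w⟫ := by
  have hr : 0 ≤ r := (norm_nonneg _).trans hpw
  have hsq : √(‖p‖ ^ 2 - r ^ 2) ^ 2 = ‖p‖ ^ 2 - r ^ 2 := Real.sq_sqrt (by nlinarith)
  have hpw_sq : ‖p - w‖ ^ 2 ≤ r ^ 2 := pow_le_pow_left₀ (norm_nonneg _) hpw 2
  nlinarith [norm_sub_sq_real p w, sq_nonneg (√(‖p‖ ^ 2 - r ^ 2) - ‖w‖)]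

theorem sqrt_sq_sub_sq_mul_norm_smul_le {p w : X} {r k : ℝ} (hpw : ‖p - w‖ ≤ r)
    (hrp : r ≤ ‖p‖) (hk : 0 ≤ k) :
    √(‖p‖ ^ 2 - r ^ 2) * ‖k • w‖ ≤ ‖p‖ * (‖p + k • w‖ - ‖p‖) :=
  calc √(‖p‖ ^ 2 - r ^ 2) * ‖k • w‖ = k * (√(‖p‖ ^ 2 - r ^ 2) * ‖w‖) := by
        rw [norm_smul, Real.norm_of_nonneg hk]; ring
    _ ≤ k * ⟪p, w⟫ := mul_le_mul_of_nonneg_left (sqrt_sq_sub_sq_mul_norm_le_inner hpw hrp) hk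
    _ = ⟪p, p + k • w⟫ - ‖p‖ ^ 2 := by
        rw [inner_add_right, real_inner_smul_right, real_inner_self_eq_norm_sq]; ring
    _ ≤ ‖p‖ * (‖p + k • w‖ - ‖p‖) := by
        nlinarith [real_inner_le_norm p (p + k • w)]

theorem Convex.exists_norm_sub_eq_and_sqrt_mul_norm_sub_le {C : Set X} (hC : Convex ℝ C)
    {a b c : X} {r R : ℝ} (hb : b ∈ C) (hc : c ∈ C) (hbr : ‖b - a‖ ≤ r) (hrR : r < R)
    (hRc : R < ‖c - a‖) :
    ∃ c' ∈ C, ‖c' - a‖ = R ∧ √(R ^ 2 - r ^ 2) * ‖c - c'‖ ≤ R * (‖c - a‖ - R) := by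
  obtain ⟨t, ht, hR⟩ : ∃ t ∈ Set.Icc (0 : ℝ) 1, ‖b + t • (c - b) - a‖ = R :=
    intermediate_value_Icc zero_le_one (by fun_prop)
      ⟨by simp only [zero_smul, add_zero]; linarith, by simpa using hRc.le⟩
  have ht0 : t ≠ 0 := by
    rintro rfl
    simp only [zero_smul, add_zero] at hR
    linarith
  set c' := b + t • (c - b)
  refine ⟨c', hC.add_smul_sub_mem hb hc ht, hR, ?_⟩
  have hray : c - c' = ((1 - t) / t) • (c' - b) := by
    rw [add_sub_cancel_left, smul_smul, div_mul_cancel₀ _ ht0]; module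
  have hk : 0 ≤ (1 - t) / t := div_nonneg (by linarith [ht.2]) ht.1
  have key := sqrt_sq_sub_sq_mul_norm_smul_le (p := c' - a) (w := c' - b)
    (by rwa [sub_sub_sub_cancel_left]) (hR ▸ hrR.le) hk
  rwa [← hray, hR, sub_add_sub_cancel'] at key

theorem Convex.exists_mem_closedBall_sqrt_mul_norm_sub_le {C : Set X} (hC : Convex ℝ C)
    {a b c : X} {r L : ℝ} (hb : b ∈ C) (hc : c ∈ C) (hbr : ‖b - a‖ ≤ r) (hr : 0 < r)
    (hL : 1 < L) (hLc : L * r < ‖c - a‖) :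
    ∃ c' ∈ C ∩ closedBall a (L * r), √(L ^ 2 - 1) * ‖c - c'‖ ≤ L * (‖c - a‖ - L * r) := by
  obtain ⟨c', hc'C, hc'a, hcc'⟩ :=
    hC.exists_norm_sub_eq_and_sqrt_mul_norm_sub_le hb hc hbr (lt_mul_of_one_lt_left hr hL) hLc
  refine ⟨c', ⟨hc'C, mem_closedBall_iff_norm.mpr hc'a.le⟩, le_of_mul_le_mul_left ?_ hr⟩
  have hsqrt : √((L * r) ^ 2 - r ^ 2) = r * √(L ^ 2 - 1) := by
    rw [show (L * r) ^ 2 - r ^ 2 = r ^ 2 * (L ^ 2 - 1) by ring, Real.sqrt_mul (sq_nonneg r),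
      Real.sqrt_sq hr.le]
  calc r * (√(L ^ 2 - 1) * ‖c - c'‖) = √((L * r) ^ 2 - r ^ 2) * ‖c - c'‖ := by rw [hsqrt]; ring
    _ ≤ L * r * (‖c - a‖ - L * r) := hcc'
    _ = r * (L * (‖c - a‖ - L * r)) := by ring

end InnerProductSpace

theorem mem_add_closedBall_zero_of_norm_sub_le {E : Type*} [SeminormedAddCommGroup E]
    {S : Set E} {x y : E} {ε : ℝ} (hy : y ∈ S)
    (hxy : ‖x - y‖ ≤ ε) : x ∈ S + closedBall (0 : E) ε :=
  ⟨y, hy, x - y, mem_closedBall_zero_iff.mpr hxy, add_sub_cancel y x⟩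

theorem neighborhood_of_intersection_euclidean
    {X : Type*} [NormedAddCommGroup X] [InnerProductSpace ℝ X]
    (C : Set X) (hC : Convex ℝ C) (a : X) (r : ℝ) (hr : 0 ≤ r)
    (hne : (C ∩ closedBall a r).Nonempty)
    (s L : ℝ) (hs : 0 < s) (hL : 1 < L) :
    (C + closedBall (0 : X) s) ∩ closedBall a (L * r + s) ⊆
      (C ∩ closedBall a (L * r)) +
        closedBall (0 : X) ((1 + 2 * L / Real.sqrt (L ^ 2 - 1)) * s) := by
  set σ := √(L ^ 2 - 1)
  have hσ : 0 < σ := Real.sqrt_pos.mpr (by nlinarith)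
  have hθ : (1 + 2 * L / σ) * s = s + 2 * L * s / σ := by ring
  have hLs : 0 ≤ 2 * L * s / σ := by positivity
  obtain ⟨b, hbC, hba⟩ := hne
  rw [mem_closedBall_iff_norm] at hba
  rintro x ⟨hxCs, hx⟩
  obtain ⟨c, hcC, u, hu, rfl⟩ := Set.mem_add.mp hxCs
  rw [mem_closedBall_zero_iff] at hu
  rw [mem_closedBall_iff_norm] at hx
  rcases hr.eq_or_lt with rfl | hr
  · obtain rfl : b = a := by simpa [sub_eq_zero] using hba
    refine mem_add_closedBall_zero_of_norm_sub_le ⟨hbC, by simp⟩ ?_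
    linarith
  by_cases hca : ‖c - a‖ ≤ L * r
  · exact mem_add_closedBall_zero_of_norm_sub_le (y := c) ⟨hcC, mem_closedBall_iff_norm.mpr hca⟩
      (by rw [add_sub_cancel_left]; linarith)
  obtain ⟨c', hc', hcc'⟩ :=
    hC.exists_mem_closedBall_sqrt_mul_norm_sub_le hbC hcC hba hr hL (not_le.mp hca)
  have hca_le : ‖c - a‖ ≤ L * r + 2 * s :=
    calc ‖c - a‖ = ‖(c + u - a) - u‖ := by congr 1; abel
      _ ≤ ‖c + u - a‖ + ‖u‖ := norm_sub_le _ _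
      _ ≤ L * r + 2 * s := by linarith
  have hcc'_le : ‖c - c'‖ ≤ 2 * L * s / σ := by
    rw [le_div_iff₀ hσ]
    nlinarith
  refine mem_add_closedBall_zero_of_norm_sub_le hc' ?_
  calc ‖c + u - c'‖ = ‖(c - c') + u‖ := by rw [sub_add_eq_add_sub]
    _ ≤ ‖c - c'‖ + ‖u‖ := norm_add_le _ _
    _ ≤ (1 + 2 * L / σ) * s := by linarith
end

section
/- Let X be a real inner product (Euclidean) space with dim X ≥ 2 and let β ∈ [0,1). For x,y ∈ X with ‖y‖ < 1 < ‖x‖, let z(x,y) denote the unique point of norm 1 on the segment [x,y], and set ω(x,y) = ‖x − z(x,y)‖/(‖x‖ − 1). Then the modulus of squareness ξ_X(β) := sup{ ω(x,y) : x,y ∈ X, ‖y‖ ≤ β < 1 < ‖x‖ } equals (1 − β²)^{−1/2}. -/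
/-!
Write `c = √(1 - β²)`. If `z = x - b • u` and `y = z - a • u` with `u = x - y`, `a > 0`,
`‖z‖ = 1`, then `‖y‖² ≤ β²` reads `2a⟪z, u⟫ ≥ c² + a²‖u‖² ≥ 2ac‖u‖`, i.e. the direction of the
segment makes inner product at least `c` with `z`. Hence `‖x‖² ≥ (1 + c‖x - z‖)²`, so the ratio
is at most `1 / c`. Conversely, for unit vectors `z, v` with `⟪z, v⟫ = c`, the point `z - c • v`
has norm exactly `β`, and `x = z + r • v` gives the ratio at least `1 / (c + r / 2)`, which tends
to `1 / c` as `r → 0`.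
-/

open Filter Topology RealInnerProductSpace

def squarenessRatios (X : Type*) [NormedAddCommGroup X] [NormedSpace ℝ X] (β : ℝ) : Set ℝ :=
  {w | ∃ x y z : X, ‖y‖ ≤ β ∧ 1 < ‖x‖ ∧ z ∈ segment ℝ x y ∧ ‖z‖ = 1 ∧ w = ‖x - z‖ / (‖x‖ - 1)}

section

variable {X : Type*} [NormedAddCommGroup X] [InnerProductSpace ℝ X]

theorem sqrt_one_sub_sq_mul_norm_le_inner {z u : X} {a β : ℝ} (hz : ‖z‖ = 1) (ha : 0 < a)
    (hβ : β ≤ 1) (h : ‖z - a • u‖ ≤ β) : √(1 - β ^ 2) * ‖u‖ ≤ ⟪z, u⟫ := by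
  have hβ0 : 0 ≤ β := (norm_nonneg _).trans h
  have hc : √(1 - β ^ 2) ^ 2 = 1 - β ^ 2 := Real.sq_sqrt (by nlinarith)
  have hexp : ‖z - a • u‖ ^ 2 = 1 - 2 * a * ⟪z, u⟫ + a ^ 2 * ‖u‖ ^ 2 := by
    rw [norm_sub_sq_real, inner_smul_right, norm_smul, hz, Real.norm_eq_abs, mul_pow, sq_abs]
    ring
  have hsq : ‖z - a • u‖ ^ 2 ≤ β ^ 2 := pow_le_pow_left₀ (norm_nonneg _) h 2
  nlinarith [sq_nonneg (a * ‖u‖ - √(1 - β ^ 2))]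

theorem one_add_mul_norm_le_norm_add {z v : X} {c : ℝ} (hz : ‖z‖ = 1) (hc : c ^ 2 ≤ 1)
    (h : c * ‖v‖ ≤ ⟪z, v⟫) : 1 + c * ‖v‖ ≤ ‖z + v‖ := by
  have hsq : (1 + c * ‖v‖) ^ 2 ≤ ‖z + v‖ ^ 2 := by
    rw [norm_add_sq_real, hz]
    nlinarith [mul_le_mul_of_nonneg_right hc (sq_nonneg ‖v‖)]
  exact (abs_le_of_sq_le_sq hsq (norm_nonneg _)).trans' (le_abs_self _)

theorem sqrt_one_sub_sq_mul_norm_sub_le {x y z : X} {β : ℝ} (hβ : β < 1) (hy : ‖y‖ ≤ β)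
    (hz : ‖z‖ = 1) (hzxy : z ∈ segment ℝ x y) : √(1 - β ^ 2) * ‖x - z‖ ≤ ‖x‖ - 1 := by
  obtain ⟨a, b, ha, hb, hab, hz_eq⟩ := hzxy
  obtain rfl : a = 1 - b := eq_sub_of_add_eq hab
  have hxz : x - z = b • (x - y) := by rw [← hz_eq]; module
  have hyz : y = z - (1 - b) • (x - y) := by rw [← hz_eq]; module
  have ha : 0 < 1 - b := by
    refine ha.lt_of_ne fun h => ?_
    rw [← h, zero_smul, sub_zero] at hyz
    linarith [hyz ▸ hz]
  have hinner := sqrt_one_sub_sq_mul_norm_le_inner hz ha hβ.le (hyz ▸ hy)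
  have hc : √(1 - β ^ 2) ^ 2 ≤ 1 := by
    have hβ0 : 0 ≤ β := (norm_nonneg _).trans hy
    rw [Real.sq_sqrt (by nlinarith)]
    nlinarith
  have hnorm := one_add_mul_norm_le_norm_add (v := b • (x - y)) hz hc <| by
    rw [norm_smul, inner_smul_right, Real.norm_of_nonneg hb, mul_left_comm]
    exact mul_le_mul_of_nonneg_left hinner hb
  rwa [← hxz, add_sub_cancel, ← le_sub_iff_add_le'] at hnorm

theorem exists_norm_eq_one_inner_eq (hdim : 2 ≤ Module.rank ℝ X) {c s : ℝ}
    (hcs : c ^ 2 + s ^ 2 = 1) : ∃ z v : X, ‖z‖ = 1 ∧ ‖v‖ = 1 ∧ ⟪z, v⟫ = c := by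
  obtain ⟨f, hf⟩ := exists_linearIndependent_of_le_rank (n := 2) (by exact_mod_cast hdim)
  have he := InnerProductSpace.gramSchmidtNormed_orthonormal hf
  set e := InnerProductSpace.gramSchmidtNormed ℝ f
  refine ⟨e 0, c • e 0 + s • e 1, he.1 0, ?_, ?_⟩
  · have h01 : ⟪e 0, e 1⟫ = 0 := he.2 (by decide)
    have hsq : ‖c • e 0 + s • e 1‖ ^ 2 = 1 := by
      rw [norm_add_sq_real, norm_smul, norm_smul, inner_smul_left, inner_smul_right, h01, he.1 0,
        he.1 1]
      simp only [Real.norm_eq_abs, mul_pow, sq_abs]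
      linear_combination hcs
    exact (pow_eq_one_iff_of_nonneg (norm_nonneg _) two_ne_zero).1 hsq
  · rw [inner_add_right, inner_smul_right, inner_smul_right, real_inner_self_eq_norm_sq, he.1 0,
      he.2 (by decide : (0 : Fin 2) ≠ 1)]
    ring

theorem mem_segment_add_smul_sub_smul (z v : X) {r c : ℝ} (hr : 0 ≤ r) (hc : 0 ≤ c) :
    z ∈ segment ℝ (z + r • v) (z - c • v) := by
  rw [mem_segment_iff_sameRay, sub_add_cancel_left, sub_sub_cancel_left, ← smul_neg, ← smul_neg]
  exact (SameRay.sameRay_nonneg_smul_left _ hr).nonneg_smul_right hc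

theorem exists_mem_squarenessRatios_inv_add_half_le (hdim : 2 ≤ Module.rank ℝ X) {β r : ℝ}
    (hβ0 : 0 ≤ β) (hβ1 : β ≤ 1) (hr : 0 < r) :
    ∃ w ∈ squarenessRatios X β, (√(1 - β ^ 2) + r / 2)⁻¹ ≤ w := by
  set c := √(1 - β ^ 2)
  have hc0 : 0 ≤ c := Real.sqrt_nonneg _
  have hcβ : c ^ 2 + β ^ 2 = 1 := by rw [Real.sq_sqrt (by nlinarith)]; ring
  obtain ⟨z, v, hz, hv, hzv⟩ := exists_norm_eq_one_inner_eq (X := X) hdim hcβ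
  have hnorm (t : ℝ) : ‖z + t • v‖ ^ 2 = 1 + 2 * t * c + t ^ 2 := by
    rw [norm_add_sq_real, inner_smul_right, hzv, norm_smul, hz, hv, Real.norm_eq_abs, mul_one,
      sq_abs]
    ring
  have hy : ‖z - c • v‖ = β := by
    rw [← sq_eq_sq₀ (norm_nonneg _) hβ0, sub_eq_add_neg, ← neg_smul, hnorm]
    linear_combination -hcβ
  have hx : 1 < ‖z + r • v‖ := by nlinarith [hnorm r, norm_nonneg (z + r • v)]
  have hx_le : ‖z + r • v‖ ≤ 1 + r * c + r ^ 2 / 2 := by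
    rw [← pow_le_pow_iff_left₀ (norm_nonneg _) (by positivity) two_ne_zero, hnorm]
    nlinarith [sq_nonneg (r * c + r ^ 2 / 2)]
  refine ⟨_, ⟨z + r • v, z - c • v, z, hy.le, hx, mem_segment_add_smul_sub_smul z v hr.le hc0,
    hz, rfl⟩, ?_⟩
  rw [add_sub_cancel_left, norm_smul, hv, mul_one, Real.norm_of_nonneg hr.le, inv_eq_one_div,
    div_le_div_iff₀ (by positivity) (by linarith)]
  nlinarith

theorem isLUB_squarenessRatios (hdim : 2 ≤ Module.rank ℝ X) {β : ℝ} (hβ0 : 0 ≤ β)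
    (hβ1 : β < 1) : IsLUB (squarenessRatios X β) (√(1 - β ^ 2))⁻¹ := by
  have hc : 0 < √(1 - β ^ 2) := Real.sqrt_pos.2 (by nlinarith)
  refine ⟨?_, fun M hM => ?_⟩
  · rintro _ ⟨x, y, z, hy, hx, hzxy, hz, rfl⟩
    rw [div_le_iff₀ (sub_pos.2 hx), inv_mul_eq_div, le_div_iff₀' hc]
    exact sqrt_one_sub_sq_mul_norm_sub_le hβ1 hy hz hzxy
  · have hlim : Tendsto (fun r : ℝ => (√(1 - β ^ 2) + r / 2)⁻¹) (𝓝[>] 0)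
        (𝓝 (√(1 - β ^ 2))⁻¹) := by
      apply tendsto_nhdsWithin_of_tendsto_nhds
      have : ContinuousAt (fun r : ℝ => (√(1 - β ^ 2) + r / 2)⁻¹) 0 := by
        fun_prop (disch := simp [hc.ne'])
      simpa using this.tendsto
    refine le_of_tendsto hlim (eventually_nhdsWithin_of_forall fun r hr => ?_)
    obtain ⟨w, hw, hle⟩ := exists_mem_squarenessRatios_inv_add_half_le hdim hβ0 hβ1.le hr
    exact hle.trans (hM hw)

end

theorem modulus_of_squareness_euclidean
    {X : Type*} [NormedAddCommGroup X] [InnerProductSpace ℝ X]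
    (hdim : 2 ≤ Module.rank ℝ X)
    (β : ℝ) (hβ0 : 0 ≤ β) (hβ1 : β < 1) :
    sSup {w : ℝ | ∃ x y z : X, ‖y‖ ≤ β ∧ 1 < ‖x‖ ∧
        z ∈ segment ℝ x y ∧ ‖z‖ = 1 ∧ w = ‖x - z‖ / (‖x‖ - 1)} =
      (1 - β ^ 2) ^ (-(1 / 2) : ℝ) := by
  rw [Real.rpow_neg (by nlinarith), ← Real.sqrt_eq_rpow]
  obtain ⟨w, hw, -⟩ := exists_mem_squarenessRatios_inv_add_half_le hdim hβ0 hβ1.le one_pos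
  exact (isLUB_squarenessRatios hdim hβ0 hβ1).csSup_eq ⟨w, hw⟩
end

section
/- Let X be a two-dimensional real Banach space and let 𝒦 be a collection of nonempty compact convex subsets of X whose total intersection ⋂_{K∈𝒦} K is nonempty. Then for every τ > 0, with B = τ·B_X, one has (⋂_{K∈𝒦} K) + B = ⋂_{K,K'∈𝒦} ((K ∩ K') + B). -/
/-!
A point `x` lies in the right-hand side iff the ball `closedBall x τ` meets every `K ∩ K'`, and in
the left-hand side iff it meets `⋂ 𝒦`. Apply Helly's theorem in the plane to the compact convex
family `𝒦 ∪ {closedBall x τ}`: three members of `𝒦` share the common point of `⋂ 𝒦`, and the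
ball together with at most two members of `𝒦` meets their intersection by assumption.
-/

open Pointwise Metric Set Finset Module

namespace Convex

variable {𝕜 E : Type*} [Field 𝕜] [LinearOrder 𝕜] [IsStrictOrderedRing 𝕜]
  [AddCommGroup E] [Module 𝕜 E] [FiniteDimensional 𝕜 E] [TopologicalSpace E] [T2Space E]

/-- Helly's theorem applied to `insert C 𝒦`: the subfamilies containing `C` lose one member. -/
theorem helly_theorem_set_compact_inter' {C : Set E} {𝒦 : Set (Set E)}
    (hC_convex : Convex 𝕜 C) (hC_compact : IsCompact C)
    (h_convex : ∀ K ∈ 𝒦, Convex 𝕜 K) (h_compact : ∀ K ∈ 𝒦, IsCompact K)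
    (h_inter : ∀ G : Finset (Set E), (G : Set (Set E)) ⊆ 𝒦 → #G ≤ finrank 𝕜 E + 1 →
      (⋂₀ (G : Set (Set E))).Nonempty)
    (h_inter_C : ∀ G : Finset (Set E), (G : Set (Set E)) ⊆ 𝒦 → #G ≤ finrank 𝕜 E →
      (C ∩ ⋂₀ (G : Set (Set E))).Nonempty) :
    (C ∩ ⋂₀ 𝒦).Nonempty := by
  classical
  rw [← sInter_insert]
  refine helly_theorem_set_compact' (forall_mem_insert.2 ⟨hC_convex, h_convex⟩)
    (forall_mem_insert.2 ⟨hC_compact, h_compact⟩) fun G hG hG_card => ?_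
  by_cases hCG : C ∈ G
  · have hG' : ((G.erase C : Finset (Set E)) : Set (Set E)) ⊆ 𝒦 := fun K hK =>
      (hG (Finset.mem_of_mem_erase hK)).resolve_left (Finset.ne_of_mem_erase hK)
    rw [← Finset.insert_erase hCG, Finset.coe_insert, sInter_insert]
    exact h_inter_C _ hG' (by rw [Finset.card_erase_of_mem hCG]; omega)
  · exact h_inter G (fun K hK => (hG hK).resolve_left (ne_of_mem_of_not_mem hK hCG)) hG_card

end Convex

theorem Finset.exists_eq_pair_of_card_le_two {α : Type*} [DecidableEq α] {s : Finset α}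
    (hs : s.Nonempty) (h_card : #s ≤ 2) : ∃ a ∈ s, ∃ b ∈ s, s = {a, b} := by
  obtain h_one | h_two : #s = 1 ∨ #s = 2 := by have := hs.card_pos; omega
  · obtain ⟨a, rfl⟩ := Finset.card_eq_one.1 h_one
    exact ⟨a, Finset.mem_singleton_self a, a, Finset.mem_singleton_self a,
      (Finset.pair_eq_singleton a).symm⟩
  · obtain ⟨a, b, -, rfl⟩ := Finset.card_eq_two.1 h_two
    exact ⟨a, by simp, b, by simp, rfl⟩

theorem mem_add_closedBall_zero_iff_s8 {E : Type*} [SeminormedAddCommGroup E] {s : Set E} {x : E}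
    {r : ℝ} : x ∈ s + closedBall 0 r ↔ (closedBall x r ∩ s).Nonempty := by
  simp only [Set.mem_add, Set.Nonempty, Set.mem_inter_iff, mem_closedBall_iff_norm, sub_zero]
  constructor
  · rintro ⟨y, hy, z, hz, rfl⟩
    exact ⟨y, by simpa using hz, hy⟩
  · rintro ⟨y, hy, hys⟩
    exact ⟨y, hys, x - y, by rwa [norm_sub_rev], by abel⟩

theorem neighborhood_of_total_intersection_two_dim_general
    {X : Type*} [NormedAddCommGroup X] [NormedSpace ℝ X]
    (hdim : Module.finrank ℝ X = 2)
    (𝒦 : Set (Set X))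
    (hcp : ∀ K ∈ 𝒦, IsCompact K)
    (hcv : ∀ K ∈ 𝒦, Convex ℝ K)
    (hint : (⋂ K ∈ 𝒦, K).Nonempty)
    (τ : ℝ) (hτ : 0 < τ) :
    (⋂ K ∈ 𝒦, K) + closedBall (0 : X) τ =
      ⋂ K ∈ 𝒦, ⋂ K' ∈ 𝒦, ((K ∩ K') + closedBall (0 : X) τ) := by
  classical
  have : FiniteDimensional ℝ X := .of_finrank_eq_succ hdim
  rw [← sInter_eq_biInter] at hint ⊢
  ext x
  simp only [Set.mem_iInter, mem_add_closedBall_zero_iff_s8]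
  refine ⟨fun h K hK K' hK' => h.mono (inter_subset_inter_right _ ?_), fun h => ?_⟩
  · exact subset_inter (sInter_subset_of_mem hK) (sInter_subset_of_mem hK')
  obtain ⟨p, hp⟩ := hint
  refine Convex.helly_theorem_set_compact_inter' (convex_closedBall x τ) (isCompact_closedBall x τ)
    hcv hcp (fun G hG _ => ⟨p, fun K hK => hp K (hG hK)⟩) fun G hG hG_card => ?_
  rcases G.eq_empty_or_nonempty with rfl | hG_ne
  · simpa using (nonempty_closedBall (x := x)).2 hτ.le
  obtain ⟨K, hK, K', hK', rfl⟩ := Finset.exists_eq_pair_of_card_le_two hG_ne (hdim ▸ hG_card)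
  simpa only [Finset.coe_pair, sInter_pair] using h K (hG hK) K' (hG hK')

theorem neighborhood_of_total_intersection_two_dim
    {X : Type*} [NormedAddCommGroup X] [NormedSpace ℝ X]
    (hdim : Module.finrank ℝ X = 2)
    (𝒦 : Set (Set X))
    (hne : ∀ K ∈ 𝒦, K.Nonempty)
    (hcp : ∀ K ∈ 𝒦, IsCompact K)
    (hcv : ∀ K ∈ 𝒦, Convex ℝ K)
    (hint : (⋂ K ∈ 𝒦, K).Nonempty)
    (τ : ℝ) (hτ : 0 < τ) :
    (⋂ K ∈ 𝒦, K) + closedBall (0 : X) τ =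
      ⋂ K ∈ 𝒦, ⋂ K' ∈ 𝒦, ((K ∩ K') + closedBall (0 : X) τ) :=
  neighborhood_of_total_intersection_two_dim_general hdim 𝒦 hcp hcv hint τ hτ
end

section
/- Let (M,ρ) be a pseudometric space and let F assign to each x ∈ M a nonempty closed bounded interval F(x) ⊆ ℝ. Suppose that for every x,y ∈ M there exist points g(x) ∈ F(x) and g(y) ∈ F(y) with |g(x) − g(y)| ≤ ρ(x,y). Then for every λ1 ≥ 1 and every x ∈ M, the first balanced refinement F¹(x) = ⋂_{z∈M} (F(z) + λ1·ρ(x,z)·[−1,1]) is nonempty, and d_H(F¹(x), F¹(y)) ≤ λ1·ρ(x,y) for all x,y ∈ M. -/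
/-!
Write `F z = [a z, b z]`; then `F¹ x` is the intersection of the intervals
`[a z - λ ρ(x,z), b z + λ ρ(x,z)]`. A two-point selection for `z, w` together with the triangle
inequality through `x` puts every lower endpoint below every upper endpoint, so the intersection
is the nonempty interval `[sup, inf]` of the endpoints. By the triangle inequality `F¹ x` lies in
the `λ ρ(x,y)`-thickening of every interval defining `F¹ y`, and for a pairwise intersecting
family of intervals on the line, thickening commutes with intersection.
-/

open Pointwise Metric

open Set

section IntervalFamily

variable {ι : Type*} [Nonempty ι] {l u : ι → ℝ}

theorem ciSup_le_ciInf_of_forall_le (h : ∀ i j, l i ≤ u j) : ⨆ i, l i ≤ ⨅ j, u j :=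
  ciSup_le fun i => le_ciInf fun j => h i j

theorem Icc_ciSup_ciInf_subset_iInter_Icc (h : ∀ i j, l i ≤ u j) :
    Icc (⨆ i, l i) (⨅ i, u i) ⊆ ⋂ i, Icc (l i) (u i) := by
  obtain ⟨i₀⟩ := ‹Nonempty ι›
  intro t ⟨hlt, htu⟩
  refine mem_iInter.2 fun i => ⟨?_, ?_⟩
  · exact (le_ciSup ⟨u i₀, by rintro _ ⟨j, rfl⟩; exact h j i₀⟩ i).trans hlt
  · exact htu.trans (ciInf_le ⟨l i₀, by rintro _ ⟨j, rfl⟩; exact h i₀ j⟩ i)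

theorem iInter_Icc_nonempty_of_forall_le (h : ∀ i j, l i ≤ u j) :
    (⋂ i, Icc (l i) (u i)).Nonempty :=
  ⟨⨆ i, l i, Icc_ciSup_ciInf_subset_iInter_Icc h ⟨le_rfl, ciSup_le_ciInf_of_forall_le h⟩⟩

theorem iInter_Icc_sub_add_subset_add_closedBall (h : ∀ i j, l i ≤ u j) {r : ℝ} (hr : 0 ≤ r) :
    ⋂ i, Icc (l i - r) (u i + r) ⊆ (⋂ i, Icc (l i) (u i)) + closedBall 0 r := by
  intro t ht
  have hlt : (⨆ i, l i) - r ≤ t :=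
    sub_le_iff_le_add.2 <| ciSup_le fun i => sub_le_iff_le_add.1 (mem_iInter.1 ht i).1
  have htu : t ≤ (⨅ i, u i) + r :=
    sub_le_iff_le_add.1 <| le_ciInf fun i => sub_le_iff_le_add.2 (mem_iInter.1 ht i).2
  have hIcc : Icc ((⨆ i, l i) - r) ((⨅ i, u i) + r) =
      Icc (⨆ i, l i) (⨅ i, u i) + closedBall 0 r := by
    rw [Real.closedBall_eq_Icc, zero_sub, zero_add,
      Icc_add_Icc (ciSup_le_ciInf_of_forall_le h) (by linarith), sub_eq_add_neg]
  exact add_subset_add_right (Icc_ciSup_ciInf_subset_iInter_Icc h) (hIcc ▸ ⟨hlt, htu⟩)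

end IntervalFamily

theorem hausDistB_le {X : Type*} [NormedAddCommGroup X] {A B : Set X} {r : ℝ} (hr : 0 ≤ r)
    (hAB : A ⊆ B + closedBall 0 r) (hBA : B ⊆ A + closedBall 0 r) : hausDistB A B ≤ r := by
  refine le_of_forall_pos_le_add fun ε hε =>
    csInf_le ⟨0, fun _ hs => hs.1.le⟩ ⟨by linarith, ?_, ?_⟩
  · exact hAB.trans (add_subset_add_left (closedBall_subset_closedBall (by linarith)))
  · exact hBA.trans (add_subset_add_left (closedBall_subset_closedBall (by linarith)))

theorem nonneg_of_symm_of_triangle {M : Type*} {ρ : M → M → ℝ} (hsymm : ∀ x y, ρ x y = ρ y x)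
    (htri : ∀ x y z, ρ x z ≤ ρ x y + ρ y z) (x y : M) : 0 ≤ ρ x y := by
  linarith [htri x x y, htri x y x, hsymm x y]

theorem first_refinement_real_line_general
    {M : Type*} (ρ : M → M → ℝ)
    (hρ_symm : ∀ x y, ρ x y = ρ y x)
    (hρ_tri : ∀ x y z, ρ x z ≤ ρ x y + ρ y z)
    (F : M → Set ℝ)
    -- each `F x` is a nonempty closed bounded interval
    (hFI : ∀ x, ∃ a b : ℝ, a ≤ b ∧ F x = Set.Icc a b)
    -- two-point selections
    (hsel : ∀ x y, ∃ gx ∈ F x, ∃ gy ∈ F y, |gx - gy| ≤ ρ x y)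
    (lam1 : ℝ) (hlam1 : 1 ≤ lam1)
    (F1 : M → Set ℝ)
    (hF1 : ∀ x, F1 x = ⋂ z, F z + closedBall (0 : ℝ) (lam1 * ρ x z)) :
    (∀ x, (F1 x).Nonempty) ∧ ∀ x y, hausDistB (F1 x) (F1 y) ≤ lam1 * ρ x y := by
  choose a b hab hFab using hFI
  have hρ0 := nonneg_of_symm_of_triangle hρ_symm hρ_tri
  have hr0 : ∀ x z, 0 ≤ lam1 * ρ x z := fun x z => mul_nonneg (by linarith) (hρ0 x z)
  have hF1Icc : ∀ x, F1 x = ⋂ z, Icc (a z - lam1 * ρ x z) (b z + lam1 * ρ x z) := fun x => by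
    simp only [hF1, hFab, Real.closedBall_eq_Icc, zero_add,
      Icc_add_Icc (hab _) (neg_le_self (hr0 x _)), sub_eq_add_neg]
  have hcompat : ∀ x z w, a z - lam1 * ρ x z ≤ b w + lam1 * ρ x w := fun x z w => by
    obtain ⟨gz, hgz, gw, hgw, hg⟩ := hsel z w
    rw [hFab] at hgz hgw
    nlinarith [hgz.1, hgw.2, (abs_le.1 hg).2, hρ_tri z x w, hρ_symm z x, hρ0 x z, hρ0 x w]
  have hincl : ∀ x y, F1 x ⊆ F1 y + closedBall 0 (lam1 * ρ x y) := fun x y => by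
    have : Nonempty M := ⟨x⟩
    rw [hF1Icc y]
    refine Subset.trans ?_ (iInter_Icc_sub_add_subset_add_closedBall (hcompat y) (hr0 x y))
    rw [hF1Icc x]
    refine iInter_mono fun z => Icc_subset_Icc ?_ ?_ <;>
      nlinarith [hρ_tri x y z]
  refine ⟨fun x => ?_, fun x y => hausDistB_le (hr0 x y) (hincl x y) (hρ_symm x y ▸ hincl y x)⟩
  have : Nonempty M := ⟨x⟩
  exact hF1Icc x ▸ iInter_Icc_nonempty_of_forall_le (hcompat x)

theorem first_refinement_real_line
    {M : Type*} (ρ : M → M → ℝ)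
    (hρ_refl : ∀ x, ρ x x = 0)
    (hρ_symm : ∀ x y, ρ x y = ρ y x)
    (hρ_tri : ∀ x y z, ρ x z ≤ ρ x y + ρ y z)
    (F : M → Set ℝ)
    -- each `F x` is a nonempty closed bounded interval
    (hFI : ∀ x, ∃ a b : ℝ, a ≤ b ∧ F x = Set.Icc a b)
    -- two-point selections
    (hsel : ∀ x y, ∃ gx ∈ F x, ∃ gy ∈ F y, |gx - gy| ≤ ρ x y)
    (lam1 : ℝ) (hlam1 : 1 ≤ lam1)
    (F1 : M → Set ℝ)
    (hF1 : ∀ x, F1 x = ⋂ z, F z + closedBall (0 : ℝ) (lam1 * ρ x z)) :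
    (∀ x, (F1 x).Nonempty) ∧ ∀ x y, hausDistB (F1 x) (F1 y) ≤ lam1 * ρ x y :=
  first_refinement_real_line_general ρ hρ_symm hρ_tri F hFI hsel lam1 hlam1 F1 hF1
end
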